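/- arXiv:2011.13659 — 2 statements merged into one kernel-verified Lean document; each statement's English description precedes it below -/
import Mathlib

section
/- Let $K$ be a field, let $n \ge 2$, and let $R = K[X]/(X^n)$. Consider the $K$-linear representation of the group of units $R^\times$ on $R$ in which a unit acts by multiplication. Then this representation is not semisimple; concretely, the ideal generated by the image of $X$ is an $R^\times$-invariant $K$-subspace of $R$ that admits no $R^\times$-invariant complementary $K$-subspace. -/
/-!
`K[X]/(Xⁿ)` is a local ring: every element is a scalar plus a multiple of the nilpotent `X`.
In a local ring a `K`-subspace stable under the units is an ideal, because for a non-unit `a`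
the element `1 - a` is a unit. A complement `Q` of a proper ideal `I` therefore contains
`q = 1 - i` with `i ∈ I`, a unit, so `Q` is everything and meets `I ≠ 0`.
-/

open Polynomial

theorem IsLocalRing.of_forall_exists_algebraMap_add_isNilpotent {K A : Type*} [Field K]
    [CommRing A] [Nontrivial A] [Algebra K A]
    (h : ∀ a : A, ∃ c : K, ∃ x : A, IsNilpotent x ∧ a = algebraMap K A c + x) :
    IsLocalRing A := by
  refine .of_isUnit_or_isUnit_one_sub_self fun a ↦ ?_
  obtain ⟨c, x, hx, rfl⟩ := h a
  by_cases hc : c = 0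
  · right
    simpa [hc] using hx.isUnit_one_sub
  · left
    exact hx.isUnit_add_left_of_commute ((isUnit_iff_ne_zero.2 hc).map (algebraMap K A))
      (Commute.all _ _)

section

variable {A K : Type*} [CommRing A] [IsLocalRing A] [Ring K] [Module K A]

theorem Submodule.mul_mem_of_forall_units_mul_mem {Q : Submodule K A}
    (hQ : ∀ u : Aˣ, ∀ v ∈ Q, (u : A) * v ∈ Q) (a : A) {v : A} (hv : v ∈ Q) :
    a * v ∈ Q := by
  rcases IsLocalRing.isUnit_or_isUnit_one_sub_self a with ha | ha
  · exact hQ ha.unit v hv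
  · -- `a * v = v - (1 - a) * v`
    simpa [sub_mul] using sub_mem hv (hQ ha.unit v hv)

theorem Submodule.eq_top_of_forall_units_mul_mem {Q : Submodule K A}
    (hQ : ∀ u : Aˣ, ∀ v ∈ Q, (u : A) * v ∈ Q) {q : A} (hq : q ∈ Q) (hu : IsUnit q) :
    Q = ⊤ := by
  refine eq_top_iff.2 fun a _ ↦ ?_
  simpa [hu.unit_spec, mul_assoc] using
    Q.mul_mem_of_forall_units_mul_mem hQ (a * ↑hu.unit⁻¹) hq

theorem IsLocalRing.not_isCompl_restrictScalars [IsScalarTower K A A] {I : Ideal A}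
    (hI_bot : I ≠ ⊥) (hI_top : I ≠ ⊤) {Q : Submodule K A}
    (hQ : ∀ u : Aˣ, ∀ v ∈ Q, (u : A) * v ∈ Q) :
    ¬ IsCompl (I.restrictScalars K) Q := by
  intro hIQ
  obtain ⟨i, hi, q, hq, hiq⟩ : ∃ i ∈ I, ∃ q ∈ Q, i + q = 1 :=
    Submodule.mem_sup.1 (hIQ.sup_eq_top ▸ Submodule.mem_top)
  have hi_nonunit : ¬ IsUnit i := fun h ↦ hI_top (I.eq_top_of_isUnit_mem hi h)
  have hq_unit : IsUnit q := (isUnit_or_isUnit_of_add_one hiq).resolve_left hi_nonunit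
  have hdisj := hIQ.disjoint
  rw [Submodule.eq_top_of_forall_units_mul_mem hQ hq hq_unit, disjoint_top,
    Submodule.restrictScalars_eq_bot_iff] at hdisj
  exact hI_bot hdisj

end

namespace AdjoinRoot

variable {K : Type*} [Field K] {n : ℕ}

theorem isNilpotent_root_X_pow : IsNilpotent (root (X ^ n : K[X])) :=
  ⟨n, by rw [← mk_X, ← map_pow, mk_self]⟩

theorem root_X_pow_ne_zero (hn : 2 ≤ n) : root (X ^ n : K[X]) ≠ 0 := by
  rw [← mk_X, Ne, mk_eq_zero, X_pow_dvd_iff]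
  exact fun h ↦ by simpa using h 1 (by omega)

theorem isLocalRing_X_pow (hn : 1 ≤ n) : IsLocalRing (AdjoinRoot (X ^ n : K[X])) := by
  have : Nontrivial (AdjoinRoot (X ^ n : K[X])) :=
    AdjoinRoot.nontrivial _ (by simp; omega)
  refine .of_forall_exists_algebraMap_add_isNilpotent (K := K) fun a ↦ ?_
  obtain ⟨p, rfl⟩ := mk_surjective a
  refine ⟨p.coeff 0, mk _ p.divX * root _,
    (Commute.all _ _).isNilpotent_mul_left isNilpotent_root_X_pow, ?_⟩
  conv_lhs => rw [← divX_mul_X_add p]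
  rw [map_add, map_mul, mk_X, mk_C, add_comm]
  rfl

end AdjoinRoot

/-- Let `K` be a field, `n ≥ 2`, and `R = K[X]/(Xⁿ)`.  The `K`-linear representation of the
group of units `Rˣ` on `R` by multiplication is not semisimple: the ideal generated by the
image of `X` is an `Rˣ`-invariant `K`-subspace of `R` admitting no `Rˣ`-invariant complementary
`K`-subspace. -/
theorem stmt6 (K : Type*) [Field K] (n : ℕ) (hn : 2 ≤ n) :
    (∀ u : (AdjoinRoot (X ^ n : Polynomial K))ˣ,
      ∀ v ∈ (Ideal.span {AdjoinRoot.root (X ^ n : Polynomial K)}).restrictScalars K,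
        (u : AdjoinRoot (X ^ n : Polynomial K)) * v ∈
          (Ideal.span {AdjoinRoot.root (X ^ n : Polynomial K)}).restrictScalars K) ∧
    ∀ Q : Submodule K (AdjoinRoot (X ^ n : Polynomial K)),
      (∀ u : (AdjoinRoot (X ^ n : Polynomial K))ˣ,
        ∀ v ∈ Q, (u : AdjoinRoot (X ^ n : Polynomial K)) * v ∈ Q) →
      ¬ IsCompl ((Ideal.span {AdjoinRoot.root (X ^ n : Polynomial K)}).restrictScalars K) Q := by
  refine ⟨fun u v hv ↦ Ideal.mul_mem_left _ _ hv, fun Q hQ ↦ ?_⟩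
  have := AdjoinRoot.isLocalRing_X_pow (K := K) (by omega : 1 ≤ n)
  exact IsLocalRing.not_isCompl_restrictScalars
    (Ideal.span_singleton_eq_bot.not.2 (AdjoinRoot.root_X_pow_ne_zero hn))
    (Ideal.span_singleton_eq_top.not.2 AdjoinRoot.isNilpotent_root_X_pow.not_isUnit) hQ
end

section
/- Let $k'/k$ be a finite purely inseparable field extension with $k' \ne k$, and let $K$ be a perfect field extension of $k$. Consider the $K$-linear representation of the group $k'^\times$ on $K \otimes_k k'$ in which $u \in k'^\times$ acts by multiplication by $1 \otimes u$. Then this representation is not semisimple: the nilradical of $K \otimes_k k'$ is a nonzero proper $k'^\times$-invariant $K$-subspace admitting no $k'^\times$-invariant complementary $K$-subspace. -/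
/-!
If `x ∈ k' \ k` then `x ^ q ^ n = c ∈ k` for the exponential characteristic `q` of `k`, and in the
perfect field `K` the element `c` has a `q ^ n`-th root `y`; so `y ⊗ 1 - 1 ⊗ x` is a nonzero
nilpotent of `K ⊗[k] k'`. A `K`-subspace stable under the units `1 ⊗ u` is an ideal, since these
span `K ⊗[k] k'` over `K`. An ideal complementary to the nilradical contains `1 - e` for a
nilpotent `e`, which is a unit, so it is everything and the nilradical is zero.
-/

open TensorProduct

theorem tmul_one_sub_one_tmul_ne_zero {k K k' : Type*} [Field k] [Ring K] [Nontrivial K]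
    [Algebra k K] [Ring k'] [Algebra k k'] (y : K) {x : k'} (hx : x ∉ Set.range (algebraMap k k')) :
    y ⊗ₜ[k] (1 : k') - 1 ⊗ₜ[k] x ≠ 0 := by
  have hx1 : x ∉ Submodule.span k {(1 : k')} := by
    rw [Submodule.mem_span_singleton]
    rintro ⟨d, rfl⟩
    exact hx ⟨d, Algebra.algebraMap_eq_smul_one d⟩
  obtain ⟨f, hfx, hf1⟩ := Submodule.exists_dual_map_eq_bot_of_notMem hx1 inferInstance
  have hf1 : f 1 = 0 := by
    simpa [Submodule.map_span] using hf1
  intro h0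
  have h := congrArg (fun w => TensorProduct.rid k K (f.lTensor K w)) h0
  simp only [map_sub, LinearMap.lTensor_tmul, TensorProduct.rid_tmul, hf1, zero_smul, zero_sub,
    neg_eq_zero, map_zero, smul_eq_zero, one_ne_zero, or_false] at h
  exact hfx h

theorem isNilpotent_tmul_one_sub_one_tmul {k K A : Type*} [CommSemiring k] [CommRing K]
    [CommRing A] [Algebra k K] [Algebra k A] (q : ℕ) [ExpChar (K ⊗[k] A) q] {n : ℕ} {c : k}
    {y : K} {x : A} (hy : y ^ q ^ n = algebraMap k K c) (hx : x ^ q ^ n = algebraMap k A c) :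
    IsNilpotent (y ⊗ₜ[k] (1 : A) - 1 ⊗ₜ[k] x) :=
  ⟨q ^ n, by
    rw [sub_pow_expChar_pow, Algebra.TensorProduct.tmul_pow, Algebra.TensorProduct.tmul_pow,
      one_pow, one_pow, hy, hx, Algebra.algebraMap_eq_smul_one, Algebra.algebraMap_eq_smul_one,
      smul_tmul, sub_self]⟩

theorem nilradical_tensorProduct_ne_bot (k k' : Type*) [Field k] [Field k'] [Algebra k k']
    [IsPurelyInseparable k k'] (hne : ¬ Function.Surjective (algebraMap k k'))
    (K : Type*) [Field K] [Algebra k K] [PerfectField K] :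
    nilradical (K ⊗[k] k') ≠ ⊥ := by
  set q := ringExpChar k
  have : ExpChar K q := expChar_of_injective_algebraMap (algebraMap k K).injective q
  have : ExpChar (K ⊗[k] k') q :=
    expChar_of_injective_algebraMap (algebraMap K (K ⊗[k] k')).injective q
  have : PerfectRing K q := PerfectField.toPerfectRing q
  obtain ⟨x, hx⟩ := not_forall.1 hne
  obtain ⟨n, c, hc⟩ := IsPurelyInseparable.pow_mem k q x
  obtain ⟨y, hy⟩ := (bijective_iterateFrobenius K q n).2 (algebraMap k K c)
  rw [iterateFrobenius_def] at hy
  exact (Submodule.ne_bot_iff _).2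
    ⟨_, mem_nilradical.2 (isNilpotent_tmul_one_sub_one_tmul q hy hc.symm),
      tmul_one_sub_one_tmul_ne_zero y hx⟩

theorem mul_mem_of_forall_units_one_tmul_mul_mem {k K k' : Type*} [CommSemiring k]
    [CommSemiring K] [Algebra k K] [DivisionRing k'] [Algebra k k'] (Q : Submodule K (K ⊗[k] k'))
    (hQ : ∀ u : k'ˣ, ∀ v ∈ Q, (1 ⊗ₜ[k] (u : k') : K ⊗[k] k') * v ∈ Q)
    (a : K ⊗[k] k') {v : K ⊗[k] k'} (hv : v ∈ Q) : a * v ∈ Q := by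
  induction a using TensorProduct.induction_on with
  | zero => simp [Q.zero_mem]
  | tmul b x =>
    rcases eq_or_ne x 0 with rfl | hx
    · simp [Q.zero_mem]
    · have hb : b ⊗ₜ[k] x = b • (1 ⊗ₜ[k] x : K ⊗[k] k') := by
        rw [smul_tmul', smul_eq_mul, mul_one]
      rw [hb, smul_mul_assoc]
      exact Q.smul_mem b (hQ (Units.mk0 x hx) v hv)
  | add a b ha hb => rw [add_mul]; exact Q.add_mem ha hb

theorem Submodule.eq_top_of_restrictScalars_nilradical_sup_eq_top {R A : Type*} [CommSemiring R]
    [CommRing A] [Algebra R A] {Q : Submodule R A} (hQ : ∀ a, ∀ v ∈ Q, a * v ∈ Q)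
    (h : (nilradical A).restrictScalars R ⊔ Q = ⊤) : Q = ⊤ := by
  obtain ⟨e, he, g, hg, heg⟩ := Submodule.mem_sup.1 (h ▸ Submodule.mem_top (x := (1 : A)))
  obtain ⟨w, hw⟩ : IsUnit g := by
    rw [show g = 1 - e by rw [← heg]; ring]
    exact (mem_nilradical.1 he).isUnit_one_sub
  refine Submodule.eq_top_iff'.2 fun a => ?_
  simpa [← hw, mul_assoc] using hQ (a * ↑w⁻¹) g hg

theorem stmt8_general (k k' : Type*) [Field k] [Field k'] [Algebra k k']
    [IsPurelyInseparable k k']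
    (hne : ¬ Function.Surjective (algebraMap k k'))
    (K : Type*) [Field K] [Algebra k K] [PerfectField K] :
    (nilradical (K ⊗[k] k')).restrictScalars K ≠ ⊥ ∧
    (nilradical (K ⊗[k] k')).restrictScalars K ≠ ⊤ ∧
    (∀ u : k'ˣ, ∀ v ∈ (nilradical (K ⊗[k] k')).restrictScalars K,
      (1 ⊗ₜ[k] (u : k') : K ⊗[k] k') * v ∈ (nilradical (K ⊗[k] k')).restrictScalars K) ∧
    ∀ Q : Submodule K (K ⊗[k] k'),
      (∀ u : k'ˣ, ∀ v ∈ Q, (1 ⊗ₜ[k] (u : k') : K ⊗[k] k') * v ∈ Q) →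
      ¬ IsCompl ((nilradical (K ⊗[k] k')).restrictScalars K) Q := by
  have hN : (nilradical (K ⊗[k] k')).restrictScalars K ≠ ⊥ := by
    rw [Ne, Submodule.restrictScalars_eq_bot_iff]
    exact nilradical_tensorProduct_ne_bot k k' hne K
  refine ⟨hN, ?_, fun u v hv => Ideal.mul_mem_left _ _ hv, fun Q hQ hcompl => hN ?_⟩
  · rw [Ne, Submodule.restrictScalars_eq_top_iff, Ideal.eq_top_iff_one]
    exact fun h => not_isNilpotent_one (mem_nilradical.1 h)
  · have hQtop := Submodule.eq_top_of_restrictScalars_nilradical_sup_eq_top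
      (fun a v hv => mul_mem_of_forall_units_one_tmul_mul_mem Q hQ a hv) hcompl.sup_eq_top
    exact eq_bot_of_isCompl_top (hQtop ▸ hcompl)

/-- Let `k'/k` be a finite purely inseparable field extension with `k' ≠ k`, and let `K` be a
perfect field extension of `k`.  The `K`-linear representation of `k'ˣ` on `K ⊗[k] k'`, in
which `u : k'ˣ` acts by multiplication by `1 ⊗ u`, is not semisimple: the nilradical of
`K ⊗[k] k'` is a nonzero proper `k'ˣ`-invariant `K`-subspace admitting no `k'ˣ`-invariant
complementary `K`-subspace. -/
theorem stmt8 (k k' : Type*) [Field k] [Field k'] [Algebra k k']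
    [FiniteDimensional k k'] [IsPurelyInseparable k k']
    (hne : ¬ Function.Surjective (algebraMap k k'))
    (K : Type*) [Field K] [Algebra k K] [PerfectField K] :
    (nilradical (K ⊗[k] k')).restrictScalars K ≠ ⊥ ∧
    (nilradical (K ⊗[k] k')).restrictScalars K ≠ ⊤ ∧
    (∀ u : k'ˣ, ∀ v ∈ (nilradical (K ⊗[k] k')).restrictScalars K,
      (1 ⊗ₜ[k] (u : k') : K ⊗[k] k') * v ∈ (nilradical (K ⊗[k] k')).restrictScalars K) ∧
    ∀ Q : Submodule K (K ⊗[k] k'),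
      (∀ u : k'ˣ, ∀ v ∈ Q, (1 ⊗ₜ[k] (u : k') : K ⊗[k] k') * v ∈ Q) →
      ¬ IsCompl ((nilradical (K ⊗[k] k')).restrictScalars K) Q :=
  stmt8_general k k' hne K
end
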